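/- arXiv:math/0509300 — 2 statements merged into one kernel-verified Lean document; each statement's English description precedes it below -/
import Mathlib

section
/- Let d ≥ 1 and let L : ℝ^d × ℝ^d → ℝ be an antisymmetric bilinear form. Let G_L be ℝ × ℝ^d with the group law (x₀,x)·(y₀,y) = (x₀ + y₀ + ½L(x,y), x + y). For 2n ≤ d let ℍ^{2n+1} × ℝ^{d−2n} denote ℝ × ℝ^d with the group law (x₀,x)·(y₀,y) = (x₀ + y₀ + Σ_{j=1}^{n}(x_{n+j}y_j − x_j y_{n+j}), x + y). Then L has rank 2n (i.e. the linear map ℝ^d → (ℝ^d)^*, w ↦ L(w,·), has rank 2n) if and only if there exists a linear automorphism of ℝ × ℝ^d which is a group isomorphism from G_L onto ℍ^{2n+1} × ℝ^{d−2n}. -/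
open Module

/-- The group law of G_L on ℝ × ℝ^d: (x₀,x)·(y₀,y) = (x₀ + y₀ + ½L(x,y), x + y). -/
noncomputable def GLmul {d : ℕ} (L : (Fin d → ℝ) →ₗ[ℝ] (Fin d → ℝ) →ₗ[ℝ] ℝ)
    (x y : ℝ × (Fin d → ℝ)) : ℝ × (Fin d → ℝ) :=
  (x.1 + y.1 + (2⁻¹ : ℝ) * L x.2 y.2, x.2 + y.2)

/-- The group law of ℍ^{2n+1} × ℝ^{d−2n} on ℝ × ℝ^d:
(x₀,x)·(y₀,y) = (x₀ + y₀ + Σ_{j=1}^{n}(x_{n+j}y_j − x_j y_{n+j}), x + y). -/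
def heisProdMul (d n : ℕ) (h : 2 * n ≤ d) (x y : ℝ × (Fin d → ℝ)) : ℝ × (Fin d → ℝ) :=
  (x.1 + y.1 + ∑ j : Fin n,
      (x.2 ⟨n + (j : ℕ), by have := j.2; omega⟩ * y.2 ⟨(j : ℕ), by have := j.2; omega⟩ -
        x.2 ⟨(j : ℕ), by have := j.2; omega⟩ * y.2 ⟨n + (j : ℕ), by have := j.2; omega⟩),
    x.2 + y.2)


/-- extension of a finite tuple by zero -/
def ext0 {d : ℕ} (x : Fin d → ℝ) (k : ℕ) : ℝ := if h : k < d then x ⟨k, h⟩ else 0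

lemma ext0_add {d : ℕ} (x y : Fin d → ℝ) (k : ℕ) : ext0 (x + y) k = ext0 x k + ext0 y k := by
  unfold ext0; split <;> simp

lemma ext0_smul {d : ℕ} (c : ℝ) (x : Fin d → ℝ) (k : ℕ) : ext0 (c • x) k = c * ext0 x k := by
  unfold ext0; split <;> simp

lemma ext0_lt {d : ℕ} (x : Fin d → ℝ) (k : ℕ) (h : k < d) : ext0 x k = x ⟨k, h⟩ := dif_pos h

lemma ext0_ge {d : ℕ} (x : Fin d → ℝ) (k : ℕ) (h : d ≤ k) : ext0 x k = 0 := dif_neg (by omega)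

/-- the standard alternating form of rank 2n on ℝ^d -/
noncomputable def Omg (d n : ℕ) : (Fin d → ℝ) →ₗ[ℝ] (Fin d → ℝ) →ₗ[ℝ] ℝ :=
  LinearMap.mk₂ ℝ
    (fun x y => ∑ j ∈ Finset.range n, (ext0 x (n + j) * ext0 y j - ext0 x j * ext0 y (n + j)))
    (by intro m₁ m₂ nn; simp only [ext0_add]; rw [← Finset.sum_add_distrib]; congr 1; ext j; ring)
    (by intro c m nn; simp only [ext0_smul, smul_eq_mul, Finset.mul_sum]; congr 1; ext j; ring)
    (by intro m n₁ n₂; simp only [ext0_add]; rw [← Finset.sum_add_distrib]; congr 1; ext j; ring)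
    (by intro c m nn; simp only [ext0_smul, smul_eq_mul, Finset.mul_sum]; congr 1; ext j; ring)

lemma Omg_apply {d n : ℕ} (x y : Fin d → ℝ) :
    Omg d n x y = ∑ j ∈ Finset.range n,
      (ext0 x (n + j) * ext0 y j - ext0 x j * ext0 y (n + j)) := rfl

/-- bridge to the sum appearing in heisProdMul -/
lemma Omg_eq_heisSum {d n : ℕ} (h2n : 2 * n ≤ d) (x y : Fin d → ℝ) :
    Omg d n x y = ∑ j : Fin n,
      (x ⟨n + (j : ℕ), by have := j.2; omega⟩ * y ⟨(j : ℕ), by have := j.2; omega⟩ -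
        x ⟨(j : ℕ), by have := j.2; omega⟩ * y ⟨n + (j : ℕ), by have := j.2; omega⟩) := by
  rw [Omg_apply, ← Fin.sum_univ_eq_sum_range]
  congr 1; ext j
  have hj : (j : ℕ) < n := j.2
  rw [ext0_lt x (n + j) (by omega), ext0_lt y j (by omega), ext0_lt x j (by omega),
    ext0_lt y (n + j) (by omega)]

section OmgRank
variable {d n : ℕ}
lemma ext0_single (i : Fin d) (k : ℕ) :
    ext0 (Pi.single i (1 : ℝ)) k = if k = (i : ℕ) then 1 else 0 := by
  unfold ext0
  split
  · rename_i h
    rw [Pi.single_apply]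
    simp [Fin.ext_iff]
  · rename_i h
    have : k ≠ (i : ℕ) := by have := i.2; omega
    simp [this]

lemma Omg_single_fst (h2n : 2 * n ≤ n + n) (j0 : ℕ) (hj0 : j0 < n) (hnd : n + j0 < d) (y : Fin d → ℝ) :
    Omg d n (Pi.single ⟨n + j0, hnd⟩ (1 : ℝ)) y = ext0 y j0 := by
  rw [Omg_apply]
  rw [Finset.sum_eq_single j0]
  · rw [ext0_single, ext0_single]
    simp only [if_pos rfl]
    have : ¬ (j0 = n + j0) := by omega
    simp [this]
    exact fun h => absurd h (by omega)
  · intro b hb hne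
    have hbn : b < n := Finset.mem_range.mp hb
    rw [ext0_single, ext0_single]
    have h1 : ¬ (n + b = n + j0) := by omega
    have h2 : ¬ (b = n + j0) := by omega
    simp [h1, h2]
    exact fun h => absurd h hne
  · intro h; exact absurd (Finset.mem_range.mpr hj0) h

lemma Omg_single_snd (j0 : ℕ) (hj0 : j0 < n) (hjd : j0 < d) (y : Fin d → ℝ) :
    Omg d n (Pi.single ⟨j0, hjd⟩ (1 : ℝ)) y = - ext0 y (n + j0) := by
  rw [Omg_apply]
  rw [Finset.sum_eq_single j0]
  · rw [ext0_single, ext0_single]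
    have : ¬ (n + j0 = j0) := by omega
    simp [this]
    exact fun h => absurd h (by omega)
  · intro b hb hne
    have hbn : b < n := Finset.mem_range.mp hb
    rw [ext0_single, ext0_single]
    have h1 : ¬ (n + b = j0) := by omega
    have h2 : ¬ (b = j0) := by omega
    simp [h1, h2]
  · intro h; exact absurd (Finset.mem_range.mpr hj0) h

lemma coord_basisFun (i : Fin d) :
    (Pi.basisFun ℝ (Fin d)).coord i = LinearMap.proj i := by
  ext v; simp [Basis.coord_apply, Pi.basisFun_repr]

lemma finrank_range_Omg (h2n : 2 * n ≤ d) :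
    finrank ℝ (LinearMap.range (Omg d n)) = 2 * n := by
  classical
  set c : Fin (2 * n) → Dual ℝ (Fin d → ℝ) := fun k => LinearMap.proj (Fin.castLE h2n k) with hc
  have hceq : c = (Pi.basisFun ℝ (Fin d)).dualBasis ∘ (Fin.castLE h2n) := by
    funext k
    simp only [hc, Function.comp]
    rw [Basis.coe_dualBasis, coord_basisFun]
  have li : LinearIndependent ℝ c := by
    rw [hceq]
    exact (Pi.basisFun ℝ (Fin d)).dualBasis.linearIndependent.comp _
      (Fin.castLE_injective h2n)
  have hrange : LinearMap.range (Omg d n) = Submodule.span ℝ (Set.range c) := by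
    apply le_antisymm
    · rintro f ⟨v, rfl⟩
      have key : Omg d n v = ∑ j : Fin n,
          ((ext0 v (n + (j : ℕ))) • c ⟨(j : ℕ), by have := j.2; omega⟩ +
            (- ext0 v (j : ℕ)) • c ⟨n + (j : ℕ), by have := j.2; omega⟩) := by
        apply LinearMap.ext
        intro y
        rw [Omg_apply, ← Fin.sum_univ_eq_sum_range]
        rw [LinearMap.sum_apply]
        congr 1
        ext j
        have hj : (j : ℕ) < n := j.2
        simp only [LinearMap.add_apply, LinearMap.smul_apply, hc, LinearMap.proj_apply,
          smul_eq_mul]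
        rw [ext0_lt y (j : ℕ) (by omega), ext0_lt y (n + (j : ℕ)) (by omega)]
        have e1 : Fin.castLE h2n ⟨(j : ℕ), by omega⟩ = (⟨(j : ℕ), by omega⟩ : Fin d) := rfl
        have e2 : Fin.castLE h2n ⟨n + (j : ℕ), by omega⟩ = (⟨n + (j : ℕ), by omega⟩ : Fin d) := rfl
        rw [e1, e2]
        ring
      rw [key]
      apply Submodule.sum_mem
      intro j _
      exact Submodule.add_mem _
        (Submodule.smul_mem _ _ (Submodule.subset_span (Set.mem_range_self _)))
        (Submodule.smul_mem _ _ (Submodule.subset_span (Set.mem_range_self _)))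
    · rw [Submodule.span_le]
      rintro f ⟨k, rfl⟩
      by_cases hk : (k : ℕ) < n
      · refine ⟨Pi.single ⟨n + (k : ℕ), by have := k.2; omega⟩ (1 : ℝ), ?_⟩
        apply LinearMap.ext
        intro y
        rw [Omg_single_fst (by omega) (k : ℕ) hk _ y]
        rw [ext0_lt y (k : ℕ) (by have := k.2; omega)]
        simp [hc, Fin.castLE]
      · refine ⟨- Pi.single ⟨(k : ℕ) - n, by have := k.2; omega⟩ (1 : ℝ), ?_⟩
        apply LinearMap.ext
        intro y
        rw [map_neg]
        simp only [LinearMap.neg_apply]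
        rw [Omg_single_snd ((k : ℕ) - n) (by have := k.2; omega) _ y]
        rw [neg_neg]
        rw [ext0_lt y (n + ((k : ℕ) - n)) (by have := k.2; omega)]
        simp only [hc, LinearMap.proj_apply]
        congr 1
        simp [Fin.ext_iff, Fin.castLE]
        omega
  rw [hrange, finrank_span_eq_card li, Fintype.card_fin]

lemma finrank_range_congr (L M : (Fin d → ℝ) →ₗ[ℝ] (Fin d → ℝ) →ₗ[ℝ] ℝ) (c : ℝ) (hc : c ≠ 0)
    (A : (Fin d → ℝ) ≃ₗ[ℝ] (Fin d → ℝ)) (h : ∀ v w, L v w = c * M (A v) (A w)) :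
    finrank ℝ (LinearMap.range L) = finrank ℝ (LinearMap.range M) := by
  let E : Dual ℝ (Fin d → ℝ) ≃ₗ[ℝ] Dual ℝ (Fin d → ℝ) :=
    A.dualMap.trans (LinearEquiv.smulOfNeZero ℝ _ c hc)
  have hLE : L = E.toLinearMap.comp (M.comp A.toLinearMap) := by
    apply LinearMap.ext; intro v; apply LinearMap.ext; intro w
    simp only [LinearMap.comp_apply, LinearEquiv.coe_coe, h v w]
    simp [E, LinearEquiv.smulOfNeZero, LinearEquiv.smulOfUnit, Units.smul_def,
      DistribMulAction.toLinearEquiv]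
  have h1 : LinearMap.range L = Submodule.map E.toLinearMap (LinearMap.range M) := by
    rw [hLE, LinearMap.range_comp, LinearMap.range_comp]
    congr 2
    rw [LinearEquiv.range]
    exact Submodule.map_top _
  rw [h1]
  exact LinearEquiv.finrank_map_eq E _
end OmgRank

noncomputable def extL (d j : ℕ) : (Fin d → ℝ) →ₗ[ℝ] ℝ :=
  if h : j < d then LinearMap.proj ⟨j, h⟩ else 0

lemma extL_apply (d j : ℕ) (g : Fin d → ℝ) : extL d j g = ext0 g j := by
  unfold extL ext0; split <;> simp

/-- insertion of a new hyperbolic pair at positions 0 and m'+1 -/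
noncomputable def F2 (dd m' : ℕ) : (ℝ × ℝ × (Fin (dd - 2) → ℝ)) →ₗ[ℝ] (Fin dd → ℝ) where
  toFun p := fun i => if (i : ℕ) = 0 then p.2.1 else if (i : ℕ) = m' + 1 then p.1
    else if (i : ℕ) ≤ m' then ext0 p.2.2 ((i : ℕ) - 1) else ext0 p.2.2 ((i : ℕ) - 2)
  map_add' p q := by funext i; simp only [Prod.fst_add, Prod.snd_add, Pi.add_apply, ext0_add]
                     split_ifs <;> ring
  map_smul' c p := by funext i
                      simp only [Prod.smul_fst, Prod.smul_snd, Pi.smul_apply, smul_eq_mul,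
                        RingHom.id_apply, ext0_smul]
                      split_ifs <;> ring

noncomputable def G2 (dd m' : ℕ) : (Fin dd → ℝ) →ₗ[ℝ] (ℝ × ℝ × (Fin (dd - 2) → ℝ)) :=
  (extL dd (m' + 1)).prod ((extL dd 0).prod
    (LinearMap.pi fun k : Fin (dd - 2) =>
      if (k : ℕ) < m' then extL dd ((k : ℕ) + 1) else extL dd ((k : ℕ) + 2)))

lemma G2_apply (dd m' : ℕ) (g : Fin dd → ℝ) :
    G2 dd m' g = (ext0 g (m' + 1), ext0 g 0,
      fun k : Fin (dd - 2) =>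
        if (k : ℕ) < m' then ext0 g ((k : ℕ) + 1) else ext0 g ((k : ℕ) + 2)) := by
  simp only [G2, LinearMap.prod_apply, Function.prod, extL_apply]
  refine Prod.ext rfl (Prod.ext rfl ?_)
  funext k
  simp only [LinearMap.pi_apply]
  split_ifs <;> simp [extL_apply]

lemma ext0_self {d : ℕ} (x : Fin d → ℝ) (i : Fin d) : ext0 x (i : ℕ) = x i := by
  rw [ext0_lt _ _ i.2]

lemma G2_fst (dd m' : ℕ) (g : Fin dd → ℝ) : (G2 dd m' g).1 = ext0 g (m' + 1) := by
  rw [G2_apply]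

lemma G2_snd (dd m' : ℕ) (g : Fin dd → ℝ) : (G2 dd m' g).2.1 = ext0 g 0 := by
  rw [G2_apply]

lemma G2_third (dd m' : ℕ) (g : Fin dd → ℝ) (k : ℕ) (hk : k < dd - 2) :
    ext0 (G2 dd m' g).2.2 k = if k < m' then ext0 g (k + 1) else ext0 g (k + 2) := by
  rw [ext0_lt _ k hk, G2_apply]

section Insert
variable {dd m' : ℕ}

lemma F2_ext0_zero (hdd : 2 * (m' + 1) ≤ dd) (p : ℝ × ℝ × (Fin (dd - 2) → ℝ)) :
    ext0 (F2 dd m' p) 0 = p.2.1 := by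
  rw [ext0_lt _ 0 (by omega)]; simp [F2]

lemma F2_ext0_mid (hdd : 2 * (m' + 1) ≤ dd) (p : ℝ × ℝ × (Fin (dd - 2) → ℝ)) :
    ext0 (F2 dd m' p) (m' + 1) = p.1 := by
  rw [ext0_lt _ (m' + 1) (by omega)]; simp [F2]

lemma F2_ext0_low (hdd : 2 * (m' + 1) ≤ dd) (p : ℝ × ℝ × (Fin (dd - 2) → ℝ)) (j : ℕ)
    (h1 : 1 ≤ j) (h2 : j ≤ m') :
    ext0 (F2 dd m' p) j = ext0 p.2.2 (j - 1) := by
  rw [ext0_lt _ j (by omega)]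
  simp only [F2, LinearMap.coe_mk, AddHom.coe_mk]
  rw [if_neg (by omega), if_neg (by omega), if_pos (by omega)]

lemma F2_ext0_high (hdd : 2 * (m' + 1) ≤ dd) (p : ℝ × ℝ × (Fin (dd - 2) → ℝ)) (j : ℕ)
    (h1 : m' + 2 ≤ j) :
    ext0 (F2 dd m' p) j = ext0 p.2.2 (j - 2) := by
  by_cases h : j < dd
  · rw [ext0_lt _ j h]
    simp only [F2, LinearMap.coe_mk, AddHom.coe_mk]
    rw [if_neg (by omega), if_neg (by omega), if_neg (by omega)]
  · rw [ext0_ge _ j (by omega), ext0_ge _ (j - 2) (by omega)]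

noncomputable def E2 (hdd : 2 * (m' + 1) ≤ dd) :
    (ℝ × ℝ × (Fin (dd - 2) → ℝ)) ≃ₗ[ℝ] (Fin dd → ℝ) := by
  refine LinearEquiv.ofLinear (F2 dd m') (G2 dd m') ?_ ?_
  · apply LinearMap.ext; intro g
    funext i
    simp only [LinearMap.comp_apply, LinearMap.id_apply]
    rw [← ext0_self (F2 dd m' (G2 dd m' g)) i, ← ext0_self g i]
    have hi := i.2
    by_cases h0 : (i : ℕ) = 0
    · rw [h0, F2_ext0_zero hdd, G2_snd]
    · by_cases h1 : (i : ℕ) = m' + 1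
      · rw [h1, F2_ext0_mid hdd, G2_fst]
      · by_cases h2 : (i : ℕ) ≤ m'
        · rw [F2_ext0_low hdd _ _ (by omega) (by omega),
            G2_third dd m' g ((i : ℕ) - 1) (by omega), if_pos (by omega),
            show (i : ℕ) - 1 + 1 = (i : ℕ) from by omega]
        · rw [F2_ext0_high hdd _ _ (by omega),
            G2_third dd m' g ((i : ℕ) - 2) (by omega), if_neg (by omega),
            show (i : ℕ) - 2 + 2 = (i : ℕ) from by omega]
  · apply LinearMap.ext; intro p
    simp only [LinearMap.comp_apply, LinearMap.id_apply]
    refine Prod.ext ?_ (Prod.ext ?_ ?_)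
    · rw [G2_fst]; exact F2_ext0_mid hdd p
    · rw [G2_snd]; exact F2_ext0_zero hdd p
    · funext k
      have hk := k.2
      rw [← ext0_self (G2 dd m' (F2 dd m' p)).2.2 k, ← ext0_self p.2.2 k]
      rw [G2_third dd m' _ (k : ℕ) hk]
      split_ifs with h
      · rw [F2_ext0_low hdd p _ (by omega) (by omega),
          show (k : ℕ) + 1 - 1 = (k : ℕ) from by omega]
      · rw [F2_ext0_high hdd p _ (by omega),
          show (k : ℕ) + 2 - 2 = (k : ℕ) from by omega]

lemma E2_apply (hdd : 2 * (m' + 1) ≤ dd) (p : ℝ × ℝ × (Fin (dd - 2) → ℝ)) :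
    E2 hdd p = F2 dd m' p := rfl

lemma Omg_F2 (hdd : 2 * (m' + 1) ≤ dd) (p q : ℝ × ℝ × (Fin (dd - 2) → ℝ)) :
    Omg dd (m' + 1) (F2 dd m' p) (F2 dd m' q) =
      p.1 * q.2.1 - p.2.1 * q.1 + Omg (dd - 2) m' p.2.2 q.2.2 := by
  rw [Omg_apply, Finset.sum_range_succ']
  have h0 : ext0 (F2 dd m' p) (m' + 1 + 0) * ext0 (F2 dd m' q) 0 -
      ext0 (F2 dd m' p) 0 * ext0 (F2 dd m' q) (m' + 1 + 0) = p.1 * q.2.1 - p.2.1 * q.1 := by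
    rw [show m' + 1 + 0 = m' + 1 from rfl, F2_ext0_mid hdd, F2_ext0_zero hdd,
      F2_ext0_zero hdd, F2_ext0_mid hdd]
  rw [h0, Omg_apply]
  rw [add_comm]
  congr 1
  apply Finset.sum_congr rfl
  intro j hj
  have hjm : j < m' := Finset.mem_range.mp hj
  rw [show m' + 1 + (j + 1) = m' + j + 2 from by ring]
  rw [F2_ext0_high hdd p (m' + j + 2) (by omega), F2_ext0_high hdd q (m' + j + 2) (by omega),
    F2_ext0_low hdd p (j + 1) (by omega) (by omega),
    F2_ext0_low hdd q (j + 1) (by omega) (by omega)]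
  rw [show m' + j + 2 - 2 = m' + j from by omega, show j + 1 - 1 = j from by omega]
end Insert

lemma darboux (dd : ℕ) : ∀ (V : Type) [AddCommGroup V] [Module ℝ V] [FiniteDimensional ℝ V]
    (_ : finrank ℝ V = dd) (B : V →ₗ[ℝ] V →ₗ[ℝ] ℝ) (_ : ∀ v, B v v = 0),
    ∃ m : ℕ, 2 * m ≤ dd ∧ ∃ φ : V ≃ₗ[ℝ] (Fin dd → ℝ), ∀ v w, B v w = Omg dd m (φ v) (φ w) := by
  induction dd using Nat.strong_induction_on with
  | _ dd IH =>
    intro V iG iM iF hdim B alt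
    have skew : ∀ x y, B x y = - B y x := by
      intro x y
      have h := alt (x + y)
      simp only [map_add, LinearMap.add_apply] at h
      have hx := alt x; have hy := alt y
      linarith
    by_cases hB : B = 0
    · refine ⟨0, by omega,
        LinearEquiv.ofFinrankEq V (Fin dd → ℝ) (by rw [hdim, Module.finrank_fin_fun]), ?_⟩
      intro v w
      rw [hB, Omg_apply]
      simp
    · have hex : ∃ u w0, B u w0 ≠ 0 := by
        by_contra h
        push_neg at h
        apply hB
        apply LinearMap.ext; intro u; apply LinearMap.ext; intro w0
        simpa using h u w0
      obtain ⟨u, w0, huw⟩ := hex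
      obtain ⟨v, Buv⟩ : ∃ v : V, B u v = 1 :=
        ⟨(B u w0)⁻¹ • w0, by rw [map_smul, smul_eq_mul]; exact inv_mul_cancel₀ huw⟩
      have Bvu : B v u = -1 := by rw [skew, Buv]
      have Buu : B u u = 0 := alt u
      have Bvv : B v v = 0 := alt v
      set π : V →ₗ[ℝ] V := LinearMap.id - (B u).smulRight v + (B v).smulRight u with hπ
      have πx : ∀ x, π x = x - (B u x) • v + (B v x) • u := by
        intro x
        simp [hπ]
      have Buπ : ∀ x, B u (π x) = 0 := by
        intro x
        rw [πx, map_add, map_sub, map_smul, map_smul, Buv, Buu]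
        simp
      have Bvπ : ∀ x, B v (π x) = 0 := by
        intro x
        rw [πx, map_add, map_sub, map_smul, map_smul, Bvv, Bvu]
        simp
      set W : Submodule ℝ V := LinearMap.ker (B u) ⊓ LinearMap.ker (B v) with hW
      have hπW : ∀ x, π x ∈ W := by
        intro x
        exact Submodule.mem_inf.mpr
          ⟨LinearMap.mem_ker.mpr (Buπ x), LinearMap.mem_ker.mpr (Bvπ x)⟩
      have memW : ∀ w : W, B u w = 0 ∧ B v w = 0 := by
        intro w
        have h := Submodule.mem_inf.mp w.2
        exact ⟨LinearMap.mem_ker.mp h.1, LinearMap.mem_ker.mp h.2⟩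
      set F : V →ₗ[ℝ] ℝ × ℝ × W := (B u).prod ((B v).prod (π.codRestrict W hπW)) with hF
      set G : ℝ × ℝ × W →ₗ[ℝ] V :=
        (LinearMap.fst ℝ ℝ (ℝ × W)).smulRight v -
          ((LinearMap.fst ℝ ℝ W).comp (LinearMap.snd ℝ ℝ (ℝ × W))).smulRight u +
          W.subtype.comp ((LinearMap.snd ℝ ℝ W).comp (LinearMap.snd ℝ ℝ (ℝ × W))) with hG
      have Gapp : ∀ p : ℝ × ℝ × W, G p = p.1 • v - p.2.1 • u + (p.2.2 : V) := by
        intro p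
        simp [hG]
      have Fapp : ∀ x, F x = (B u x, B v x, (⟨π x, hπW x⟩ : W)) := by
        intro x
        simp [hF]
        rfl
      have hFG : F.comp G = LinearMap.id := by
        apply LinearMap.ext; intro p
        rw [LinearMap.comp_apply, LinearMap.id_apply, Fapp, Gapp]
        obtain ⟨h1, h2⟩ := memW p.2.2
        have e1 : B u (p.1 • v - p.2.1 • u + (p.2.2 : V)) = p.1 := by
          rw [map_add, map_sub, map_smul, map_smul, Buv, Buu, h1]
          simp
        have e2 : B v (p.1 • v - p.2.1 • u + (p.2.2 : V)) = p.2.1 := by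
          rw [map_add, map_sub, map_smul, map_smul, Bvv, Bvu, h2]
          simp
        refine Prod.ext e1 (Prod.ext e2 ?_)
        show (⟨π _, _⟩ : W) = p.2.2
        apply Subtype.ext
        show π (p.1 • v - p.2.1 • u + (p.2.2 : V)) = (p.2.2 : V)
        rw [πx, e1, e2]
        abel
      have hGF : G.comp F = LinearMap.id := by
        apply LinearMap.ext; intro x
        rw [LinearMap.comp_apply, LinearMap.id_apply, Fapp, Gapp]
        show B u x • v - B v x • u + π x = x
        rw [πx]
        abel
      set ψ : V ≃ₗ[ℝ] ℝ × ℝ × W := LinearEquiv.ofLinear F G hFG hGF with hψ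
      have hdim2 : (1 : ℕ) + (1 + finrank ℝ W) = dd := by
        have h1 : finrank ℝ (ℝ × ℝ × W) = dd := by
          rw [← hdim]
          exact (LinearEquiv.finrank_eq ψ).symm
        rw [Module.finrank_prod, Module.finrank_prod, Module.finrank_self] at h1
        exact h1
      have hfW : finrank ℝ W = dd - 2 := by omega
      have hdd2 : 2 ≤ dd := by omega
      set BW : W →ₗ[ℝ] W →ₗ[ℝ] ℝ := LinearMap.mk₂ ℝ (fun x y : W => B x y)
        (by intro a b c; simp) (by intro a b c; simp)
        (by intro a b c; simp) (by intro a b c; simp) with hBW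
      have BWapp : ∀ a b : W, BW a b = B a b := fun a b => rfl
      have altW : ∀ x : W, BW x x = 0 := fun x => alt x
      obtain ⟨m', h2m', φ', hφ'⟩ := IH (dd - 2) (by omega) W hfW BW altW
      have hdd : 2 * (m' + 1) ≤ dd := by omega
      refine ⟨m' + 1, by omega, ?_⟩
      set Φ : V ≃ₗ[ℝ] (Fin dd → ℝ) :=
        ψ.trans (((LinearEquiv.refl ℝ ℝ).prodCongr ((LinearEquiv.refl ℝ ℝ).prodCongr φ')).trans
          (E2 hdd)) with hΦ
      refine ⟨Φ, ?_⟩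
      intro x y
      have happ : ∀ z, Φ z = F2 dd m' (B u z, B v z, φ' ⟨π z, hπW z⟩) := by
        intro z
        rfl
      rw [happ, happ, Omg_F2 hdd]
      have hmid : Omg (dd - 2) m' (φ' ⟨π x, hπW x⟩) (φ' ⟨π y, hπW y⟩) = B (π x) (π y) := by
        rw [← hφ', BWapp]
      show B x y = B u x * B v y - B v x * B u y +
        Omg (dd - 2) m' (φ' ⟨π x, hπW x⟩) (φ' ⟨π y, hπW y⟩)
      rw [hmid]
      have h1 : B x v = - B v x := skew x v
      have h2 : B x u = - B u x := skew x u
      have h3 : B u y = - B y u := skew u y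
      have h4 : B v y = - B y v := skew v y
      have expand : B (π x) (π y) = B x y - B u x * B v y + B v x * B u y := by
        rw [πx x, πx y]
        simp only [map_add, map_sub, map_smul, LinearMap.sub_apply, LinearMap.add_apply,
          LinearMap.smul_apply, smul_eq_mul]
        rw [h1, h2, Buv, Bvu, Buu, Bvv]
        ring
      rw [expand]
      ring

lemma GL_eq {d : ℕ} (L : (Fin d → ℝ) →ₗ[ℝ] (Fin d → ℝ) →ₗ[ℝ] ℝ) (x y : ℝ × (Fin d → ℝ)) :
    GLmul L x y = x + y + (((2⁻¹ : ℝ) * L x.2 y.2) • ((1 : ℝ), (0 : Fin d → ℝ))) := by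
  refine Prod.ext ?_ ?_ <;> simp [GLmul]

lemma heis_eq {d n : ℕ} (h2n : 2 * n ≤ d) (p q : ℝ × (Fin d → ℝ)) :
    heisProdMul d n h2n p q = p + q + ((Omg d n p.2 q.2) • ((1 : ℝ), (0 : Fin d → ℝ))) := by
  refine Prod.ext ?_ ?_
  · simp only [heisProdMul, Prod.fst_add, Prod.smul_fst, smul_eq_mul, mul_one]
    rw [Omg_eq_heisSum h2n]
  · simp [heisProdMul]

/-- For an antisymmetric bilinear form L on ℝ^d and 2n ≤ d, L has rank 2n if and
only if there is a linear automorphism of ℝ × ℝ^d which is a group isomorphism from G_L onto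
ℍ^{2n+1} × ℝ^{d−2n}. -/
theorem stmt2 (d n : ℕ) (hd : 1 ≤ d) (h2n : 2 * n ≤ d)
    (L : (Fin d → ℝ) →ₗ[ℝ] (Fin d → ℝ) →ₗ[ℝ] ℝ)
    (hL : ∀ v w, L v w = - L w v) :
    Module.finrank ℝ (LinearMap.range L) = 2 * n ↔
      ∃ φ : (ℝ × (Fin d → ℝ)) ≃ₗ[ℝ] (ℝ × (Fin d → ℝ)),
        ∀ x y, φ (GLmul L x y) = heisProdMul d n h2n (φ x) (φ y) := by
  constructor
  · intro hrank
    have hLvv : ∀ v, L v v = 0 := by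
      intro v; have := hL v v; linarith
    obtain ⟨m, hm, φ, hφ⟩ := darboux d (Fin d → ℝ) (Module.finrank_fin_fun ℝ)
      ((2⁻¹ : ℝ) • L) (by intro v; simp [hLvv v])
    have hφ' : ∀ v w, (2⁻¹ : ℝ) * L v w = Omg d m (φ v) (φ w) := by
      intro v w
      have := hφ v w
      simpa using this
    have hrel : ∀ v w, L v w = 2 * Omg d m (φ v) (φ w) := by
      intro v w; have := hφ' v w; linarith
    have hrank2 : finrank ℝ (LinearMap.range L) = 2 * m :=
      (finrank_range_congr L (Omg d m) 2 (by norm_num) φ hrel).trans (finrank_range_Omg hm)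
    have hmn : m = n := by omega
    subst hmn
    refine ⟨(LinearEquiv.refl ℝ ℝ).prodCongr φ, ?_⟩
    intro x y
    have Φapp : ∀ p : ℝ × (Fin d → ℝ),
        ((LinearEquiv.refl ℝ ℝ).prodCongr φ) p = (p.1, φ p.2) := fun p => rfl
    rw [GL_eq, heis_eq h2n, map_add, map_add, map_smul]
    simp only [Φapp]
    rw [hφ' x.2 y.2]
    simp
  · rintro ⟨Φ, hΦ⟩
    have main : ∀ x y : ℝ × (Fin d → ℝ),
        (((2⁻¹ : ℝ) * L x.2 y.2) • Φ ((1 : ℝ), (0 : Fin d → ℝ))) =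
          (Omg d n (Φ x).2 (Φ y).2) • ((1 : ℝ), (0 : Fin d → ℝ)) := by
      intro x y
      have h := hΦ x y
      rw [GL_eq, heis_eq h2n, map_add, map_add, map_smul] at h
      exact add_left_cancel h
    by_cases hL0 : L = 0
    · have hS : ∀ z w : Fin d → ℝ, Omg d n z w = 0 := by
        intro z w
        have hmain := main (Φ.symm ((0 : ℝ), z)) (Φ.symm ((0 : ℝ), w))
        rw [hL0] at hmain
        simp only [LinearMap.zero_apply, mul_zero, zero_smul,
          LinearEquiv.apply_symm_apply] at hmain
        have h1 := congrArg Prod.fst hmain.symm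
        simpa using h1
      have hn : n = 0 := by
        by_contra h
        have hpos : 0 < n := Nat.pos_of_ne_zero h
        have h1 := hS (Pi.single ⟨n + 0, by omega⟩ (1 : ℝ)) (Pi.single ⟨0, by omega⟩ (1 : ℝ))
        rw [Omg_single_fst (by omega) 0 hpos (by omega)] at h1
        rw [ext0_single] at h1
        simp at h1
      rw [hn, hL0, LinearMap.range_zero]
      simp
    · have hex : ∃ v0 w0, L v0 w0 ≠ 0 := by
        by_contra h
        push_neg at h
        apply hL0
        apply LinearMap.ext; intro u; apply LinearMap.ext; intro c
        simpa using h u c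
      obtain ⟨v0, w0, hvw⟩ := hex
      set a : ℝ := (Φ ((1 : ℝ), (0 : Fin d → ℝ))).1 with ha
      set b : Fin d → ℝ := (Φ ((1 : ℝ), (0 : Fin d → ℝ))).2 with hb
      have hb0 : b = 0 := by
        have h := congrArg Prod.snd (main ((0 : ℝ), v0) ((0 : ℝ), w0))
        simp only [Prod.smul_snd, smul_zero] at h
        have h2 : ((2⁻¹ : ℝ) * L v0 w0) • b = 0 := h
        rcases smul_eq_zero.mp h2 with h3 | h3
        · exact absurd h3 (mul_ne_zero (by norm_num) hvw)
        · exact h3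
      have ha0 : a ≠ 0 := by
        intro h
        have h10 : Φ ((1 : ℝ), (0 : Fin d → ℝ)) = 0 := by
          have he : Φ ((1 : ℝ), (0 : Fin d → ℝ)) = (a, b) := rfl
          rw [he, h, hb0]; rfl
        have h0 := Φ.injective (by rw [h10, map_zero] : Φ ((1 : ℝ), (0 : Fin d → ℝ)) = Φ 0)
        have h1 := congrArg Prod.fst h0
        norm_num at h1
      set A : (Fin d → ℝ) →ₗ[ℝ] (Fin d → ℝ) :=
        (LinearMap.snd ℝ ℝ (Fin d → ℝ)).comp
          (Φ.toLinearMap.comp (LinearMap.inr ℝ ℝ (Fin d → ℝ))) with hA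
      have Aapp : ∀ x, A x = (Φ ((0 : ℝ), x)).2 := fun x => rfl
      have Φlin : ∀ p : ℝ × (Fin d → ℝ),
          Φ p = p.1 • Φ ((1 : ℝ), (0 : Fin d → ℝ)) + Φ ((0 : ℝ), p.2) := by
        intro p
        have hp : p = p.1 • ((1 : ℝ), (0 : Fin d → ℝ)) + ((0 : ℝ), p.2) := by
          refine Prod.ext ?_ ?_ <;> simp
        conv_lhs => rw [hp]
        rw [map_add, map_smul]
      have Asurj : Function.Surjective A := by
        intro z
        refine ⟨(Φ.symm ((0 : ℝ), z)).2, ?_⟩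
        have hz : Φ (Φ.symm ((0 : ℝ), z)) = ((0 : ℝ), z) := Φ.apply_symm_apply _
        have hb0' : (Φ ((1 : ℝ), (0 : Fin d → ℝ))).2 = 0 := hb0
        have h1 : (Φ.symm ((0 : ℝ), z)).1 • (Φ ((1 : ℝ), (0 : Fin d → ℝ))).2 +
            (Φ ((0 : ℝ), (Φ.symm ((0 : ℝ), z)).2)).2 = z := by
          have h2 := congrArg Prod.snd ((Φlin (Φ.symm ((0 : ℝ), z))).symm.trans hz)
          simpa using h2
        rw [hb0', smul_zero, zero_add] at h1
        rw [Aapp]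
        exact h1
      have Ainj : Function.Injective A := LinearMap.injective_iff_surjective.mpr Asurj
      set Aeq : (Fin d → ℝ) ≃ₗ[ℝ] (Fin d → ℝ) := LinearEquiv.ofBijective A ⟨Ainj, Asurj⟩
        with hAeq
      have Aeqapp : ∀ x, Aeq x = A x := fun x => rfl
      have hfirst : ∀ v w, (2⁻¹ : ℝ) * L v w * a = Omg d n (A v) (A w) := by
        intro v w
        have h := congrArg Prod.fst (main ((0 : ℝ), v) ((0 : ℝ), w))
        simp only [Prod.smul_fst, smul_eq_mul, mul_one] at h
        rw [Aapp, Aapp]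
        exact h
      have hrel : ∀ v w, L v w = (2 * a⁻¹) * Omg d n (Aeq v) (Aeq w) := by
        intro v w
        rw [Aeqapp, Aeqapp, ← hfirst v w]
        field_simp
      exact (finrank_range_congr L (Omg d n) (2 * a⁻¹)
        (mul_ne_zero two_ne_zero (inv_ne_zero ha0)) Aeq hrel).trans (finrank_range_Omg h2n)
end

section
/- Let n ≥ 1, λ : Fin n → ℝ, and let J, K be finite subsets (Finsets) of Fin n. Then |Σ_{j∈J} λ_j − Σ_{k∈K} λ_k| ≤ Σ_{j} |λ_j|, and equality holds if and only if either ({j : λ_j > 0} ⊆ J∖K, {j : λ_j < 0} ⊆ K∖J, λ_j ≥ 0 for all j ∈ J∖K, and λ_j ≤ 0 for all j ∈ K∖J) or the same condition holds with the roles of J and K interchanged. -/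
/-!
Splitting `J` and `K` along `J ∩ K`, the difference of sums is `∑ⱼ g j`, where `g` agrees with `λ`
on `J \ K`, with `-λ` on `K \ J` and vanishes elsewhere. Since `|g j| ≤ |λ j|`, the triangle
inequality gives the bound, and equality forces `g = |λ|` or `-g = |λ|` pointwise; interchanging
`J` and `K` replaces `g` by `-g`.
-/

open Finset

namespace Finset

variable {ι α : Type*} [AddCommGroup α] [LinearOrder α] [IsOrderedAddMonoid α]

theorem abs_sum_eq_sum_iff_of_abs_le {s : Finset ι} {f g : ι → α} (h : ∀ i ∈ s, |g i| ≤ f i) :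
    |∑ i ∈ s, g i| = ∑ i ∈ s, f i ↔ (∀ i ∈ s, g i = f i) ∨ (∀ i ∈ s, -g i = f i) := by
  have hg : ∀ i ∈ s, g i ≤ f i := fun i hi => (le_abs_self _).trans (h i hi)
  have hng : ∀ i ∈ s, -g i ≤ f i := fun i hi => (neg_le_abs _).trans (h i hi)
  have hf : 0 ≤ ∑ i ∈ s, f i := sum_nonneg fun i hi => (abs_nonneg _).trans (h i hi)
  rw [← sum_eq_sum_iff_of_le hg, ← sum_eq_sum_iff_of_le hng, sum_neg_distrib]
  constructor
  · intro heq
    rcases le_or_gt 0 (∑ i ∈ s, g i) with hpos | hneg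
    · exact .inl (by rwa [abs_of_nonneg hpos] at heq)
    · exact .inr (by rwa [abs_of_neg hneg] at heq)
  · rintro (heq | heq)
    · rw [heq, abs_of_nonneg hf]
    · rw [← abs_neg, heq, abs_of_nonneg hf]

end Finset

section SignedRestrict

variable {ι α : Type*} [DecidableEq ι] [AddCommGroup α]

def signedRestrict (J K : Finset ι) (lam : ι → α) (j : ι) : α :=
  (if j ∈ J \ K then lam j else 0) - (if j ∈ K \ J then lam j else 0)

theorem sum_signedRestrict [Fintype ι] (J K : Finset ι) (lam : ι → α) :
    ∑ j, signedRestrict J K lam j = ∑ j ∈ J, lam j - ∑ k ∈ K, lam k := by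
  simp only [signedRestrict, sum_sub_distrib, sum_ite_mem, univ_inter]
  exact sum_sdiff_sub_sum_sdiff

theorem signedRestrict_swap (J K : Finset ι) (lam : ι → α) (j : ι) :
    signedRestrict K J lam j = -signedRestrict J K lam j := by
  simp only [signedRestrict, neg_sub]

variable [LinearOrder α] [IsOrderedAddMonoid α]

def SignAdapted (J K : Finset ι) (lam : ι → α) : Prop :=
  (∀ j, 0 < lam j → j ∈ J \ K) ∧ (∀ j, lam j < 0 → j ∈ K \ J) ∧
    (∀ j ∈ J \ K, 0 ≤ lam j) ∧ (∀ j ∈ K \ J, lam j ≤ 0)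

theorem abs_signedRestrict_le (J K : Finset ι) (lam : ι → α) (j : ι) :
    |signedRestrict J K lam j| ≤ |lam j| := by
  by_cases hJ : j ∈ J <;> by_cases hK : j ∈ K <;> simp [signedRestrict, hJ, hK]

theorem signedRestrict_apply_eq_abs_iff (J K : Finset ι) (lam : ι → α) (j : ι) :
    signedRestrict J K lam j = |lam j| ↔ (0 < lam j → j ∈ J \ K) ∧ (lam j < 0 → j ∈ K \ J) ∧
      (j ∈ J \ K → 0 ≤ lam j) ∧ (j ∈ K \ J → lam j ≤ 0) := by
  by_cases hJK : j ∈ J \ K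
  · have hKJ : j ∉ K \ J := fun h => (mem_sdiff.1 hJK).2 (mem_sdiff.1 h).1
    rw [signedRestrict, if_pos hJK, if_neg hKJ, sub_zero, eq_comm, abs_eq_self]
    simp [hJK, hKJ]
  · by_cases hKJ : j ∈ K \ J
    · rw [signedRestrict, if_neg hJK, if_pos hKJ, zero_sub, eq_comm, abs_eq_neg_self]
      simp [hJK, hKJ]
    · rw [signedRestrict, if_neg hJK, if_neg hKJ, sub_self, eq_comm, abs_eq_zero, le_antisymm_iff]
      simp [hJK, hKJ]

theorem signedRestrict_eq_abs_iff (J K : Finset ι) (lam : ι → α) :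
    (∀ j, signedRestrict J K lam j = |lam j|) ↔ SignAdapted J K lam := by
  simp only [signedRestrict_apply_eq_abs_iff, forall_and, SignAdapted]

end SignedRestrict

theorem stmt17_general (n : ℕ) (lam : Fin n → ℝ) (J K : Finset (Fin n)) :
    |∑ j ∈ J, lam j - ∑ k ∈ K, lam k| ≤ ∑ j : Fin n, |lam j| ∧
    (|∑ j ∈ J, lam j - ∑ k ∈ K, lam k| = ∑ j : Fin n, |lam j| ↔
      (((∀ j, 0 < lam j → j ∈ J \ K) ∧ (∀ j, lam j < 0 → j ∈ K \ J) ∧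
          (∀ j ∈ J \ K, 0 ≤ lam j) ∧ (∀ j ∈ K \ J, lam j ≤ 0)) ∨
        ((∀ j, 0 < lam j → j ∈ K \ J) ∧ (∀ j, lam j < 0 → j ∈ J \ K) ∧
          (∀ j ∈ K \ J, 0 ≤ lam j) ∧ (∀ j ∈ J \ K, lam j ≤ 0)))) := by
  have hle : ∀ j ∈ univ, |signedRestrict J K lam j| ≤ |lam j| :=
    fun j _ => abs_signedRestrict_le J K lam j
  rw [← sum_signedRestrict J K lam]
  refine ⟨(abs_sum_le_sum_abs _ _).trans (sum_le_sum hle), ?_⟩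
  rw [abs_sum_eq_sum_iff_of_abs_le hle]
  simp only [mem_univ, forall_const, ← signedRestrict_swap]
  exact (signedRestrict_eq_abs_iff J K lam).or (signedRestrict_eq_abs_iff K J lam)

/-- |Σ_{j∈J} λ_j − Σ_{k∈K} λ_k| ≤ Σ_j |λ_j|, with equality iff either
({λ > 0} ⊆ J∖K, {λ < 0} ⊆ K∖J, λ ≥ 0 on J∖K, λ ≤ 0 on K∖J) or the same with J and K
interchanged. -/
theorem stmt17 (n : ℕ) (hn : 1 ≤ n) (lam : Fin n → ℝ) (J K : Finset (Fin n)) :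
    |∑ j ∈ J, lam j - ∑ k ∈ K, lam k| ≤ ∑ j : Fin n, |lam j| ∧
    (|∑ j ∈ J, lam j - ∑ k ∈ K, lam k| = ∑ j : Fin n, |lam j| ↔
      (((∀ j, 0 < lam j → j ∈ J \ K) ∧ (∀ j, lam j < 0 → j ∈ K \ J) ∧
          (∀ j ∈ J \ K, 0 ≤ lam j) ∧ (∀ j ∈ K \ J, lam j ≤ 0)) ∨
        ((∀ j, 0 < lam j → j ∈ K \ J) ∧ (∀ j, lam j < 0 → j ∈ J \ K) ∧
          (∀ j ∈ K \ J, 0 ≤ lam j) ∧ (∀ j ∈ J \ K, lam j ≤ 0)))) :=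
  stmt17_general n lam J K
end
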